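/- Let f : X × P → ]-∞,+∞] be a proper convex lower semicontinuous function on the product of two Euclidean spaces whose effective domain is a product set Y × P₀, and suppose that for every y ∈ Y the function f(y,·) is differentiable on the interior of P₀. Then for any p in the interior of P₀, the marginal function g(p) = inf_{y ∈ X} f(y,p), if the infimum is attained at some y*, is differentiable at p with ∇g(p) = ∇_p f(y*, p). -/

import Mathlib

open Filter Topology

/-!
A minimiser `y⋆` of `f (·, p)` gives the upper barrier `g q ≤ f (y⋆, q)`, touching `g` at `p`.
Joint convexity gives a lower barrier: `p` is the midpoint of `(y, q)` and `(y⋆, 2p - q)` in the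
second coordinate, so `g p ≤ (f (y, q) + f (y⋆, 2p - q)) / 2` for every `y`, whence
`2 g p - f (y⋆, 2p - q) ≤ g q`. Both barriers are differentiable at `p` with the gradient of
`f (y⋆, ·)`, and `g` is squeezed between them.
-/

theorem EReal.toReal_mem_Icc {a b : ℝ} {x : EReal} (hx : x ∈ Set.Icc (a : EReal) b) :
    x.toReal ∈ Set.Icc a b := by
  have hbot : x ≠ ⊥ := ne_bot_of_le_ne_bot (EReal.coe_ne_bot a) hx.1
  have htop : x ≠ ⊤ := ne_top_of_le_ne_top (EReal.coe_ne_top b) hx.2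
  lift x to ℝ using ⟨htop, hbot⟩
  simpa using hx

theorem two_nsmul_sub_self {G : Type*} [AddCommGroup G] (p : G) : 2 • p - p = p := by
  rw [two_nsmul, add_sub_cancel_right]

section Squeeze

variable {E : Type*} [NormedAddCommGroup E] [NormedSpace ℝ E]
  {l u h : E → ℝ} {D : E →L[ℝ] ℝ} {p : E}

theorem hasFDerivAt_of_sandwich (hl : HasFDerivAt l D p) (hh : HasFDerivAt h D p)
    (hluh : ∀ᶠ q in 𝓝 p, u q ∈ Set.Icc (l q) (h q)) (hlp : l p = u p) (hhp : h p = u p) :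
    HasFDerivAt u D p := by
  refine .of_isLittleO <| Asymptotics.IsBigO.trans_isLittleO ?_
    (hl.isLittleO.norm_left.add hh.isLittleO.norm_left)
  refine Asymptotics.IsBigO.of_bound 1 ?_
  filter_upwards [hluh] with q ⟨hlq, hqh⟩
  have hl₀ := abs_nonneg (l q - l p - D (q - p))
  have hh₀ := abs_nonneg (h q - h p - D (q - p))
  simp only [Real.norm_eq_abs, one_mul]
  rw [abs_of_nonneg (add_nonneg hl₀ hh₀), abs_le]
  constructor <;> linarith [neg_abs_le (l q - l p - D (q - p)), le_abs_self (h q - h p - D (q - p))]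

theorem HasFDerivAt.two_mul_sub_comp_two_smul_sub (hh : HasFDerivAt h D p) :
    HasFDerivAt (fun q => 2 * h p - h (2 • p - q)) D p := by
  have hσ : HasFDerivAt (fun q : E => 2 • p - q) (-ContinuousLinearMap.id ℝ E) p :=
    (hasFDerivAt_id p).const_sub (2 • p)
  rw [← two_nsmul_sub_self p] at hh
  refine ((hh.comp p hσ).const_sub (2 * h p)).congr_fderiv ?_
  ext v
  simp

end Squeeze

section Convex

variable {X P : Type*} [AddCommGroup X] [Module ℝ X] [AddCommGroup P] [Module ℝ P]
  {f : X × P → EReal}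

theorem two_mul_sub_le_iInf_of_convex (hbot : ∀ z, f z ≠ ⊥)
    (hconv : ∀ (z w : X × P) (a b : ℝ), 0 < a → 0 < b → a + b = 1 → f z < ⊤ → f w < ⊤ →
      f (a • z + b • w) ≤ (a : EReal) * f z + (b : EReal) * f w)
    {p q : P} {m c : ℝ} {y' : X} (hm : ∀ y, (m : EReal) ≤ f (y, p))
    (hc : f (y', 2 • p - q) = c) :
    ((2 * m - c : ℝ) : EReal) ≤ ⨅ y, f (y, q) := by
  refine le_iInf fun y => ?_
  rcases eq_or_ne (f (y, q)) ⊤ with htop | htop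
  · simp [htop]
  set A := (f (y, q)).toReal
  have hA : f (y, q) = A := (EReal.coe_toReal htop (hbot _)).symm
  have hmid : (1 / 2 : ℝ) • (y, q) + (1 / 2 : ℝ) • (y', 2 • p - q)
      = ((1 / 2 : ℝ) • y + (1 / 2 : ℝ) • y', p) := by
    ext
    · rfl
    · simp only [Prod.snd_add, Prod.smul_snd]
      module
  have hconv' := hconv (y, q) (y', 2 • p - q) (1 / 2) (1 / 2) (by norm_num) (by norm_num)
    (by norm_num) (hA ▸ EReal.coe_lt_top A) (hc ▸ EReal.coe_lt_top c)
  rw [hmid, hA, hc] at hconv'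
  have : m ≤ 1 / 2 * A + 1 / 2 * c := by exact_mod_cast (hm _).trans hconv'
  rw [hA]
  exact_mod_cast (by linarith : 2 * m - c ≤ A)

end Convex

theorem stmt0_general
    {X P : Type*} [NormedAddCommGroup X] [InnerProductSpace ℝ X]
    [NormedAddCommGroup P] [InnerProductSpace ℝ P] [FiniteDimensional ℝ P]
    (f : X × P → EReal) (Y : Set X) (P₀ : Set P)
    (hbot : ∀ z, f z ≠ ⊥) (hprop : ∃ z, f z ≠ ⊤)
    (hconv : ∀ (z w : X × P) (a b : ℝ), 0 < a → 0 < b → a + b = 1 → f z < ⊤ → f w < ⊤ →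
      f (a • z + b • w) ≤ (a : EReal) * f z + (b : EReal) * f w)
    (hdom : {z : X × P | f z < ⊤} = Y ×ˢ P₀)
    (hdiff : ∀ y ∈ Y, ∀ p ∈ interior P₀,
      DifferentiableAt ℝ (fun q => (f (y, q)).toReal) p)
    (g : P → EReal) (hg : ∀ q, g q = ⨅ y : X, f (y, q))
    (p : P) (hp : p ∈ interior P₀)
    (ystar : X) (hmin : f (ystar, p) = g p) :
    HasGradientAt (fun q => (g q).toReal)
      (gradient (fun q => (f (ystar, q)).toReal) p) p := by
  have hdom' (y : X) (q : P) : f (y, q) < ⊤ ↔ y ∈ Y ∧ q ∈ P₀ := Set.ext_iff.1 hdom (y, q)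
  obtain ⟨⟨y₀, q₀⟩, hz₀⟩ := hprop
  have hy₀ : y₀ ∈ Y := ((hdom' y₀ q₀).1 hz₀.lt_top).1
  have hgp : g p < ⊤ :=
    (hg p ▸ iInf_le _ y₀).trans_lt ((hdom' y₀ p).2 ⟨hy₀, interior_subset hp⟩)
  have hystar : ystar ∈ Y := ((hdom' ystar p).1 (hmin ▸ hgp)).1
  set H := fun q => (f (ystar, q)).toReal
  have hfH (q : P) (hq : q ∈ P₀) : f (ystar, q) = H q :=
    (EReal.coe_toReal ((hdom' ystar q).2 ⟨hystar, hq⟩).ne (hbot _)).symm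
  have hH : HasFDerivAt H _ p := (hdiff ystar hystar p hp).hasGradientAt
  have hHp : H p = (g p).toReal := by rw [← hmin]
  have hreflect : Tendsto (fun q : P => 2 • p - q) (𝓝 p) (𝓝 p) := by
    have := (continuous_sub_left (2 • p)).tendsto p
    rwa [two_nsmul_sub_self] at this
  have hP₀ : P₀ ∈ 𝓝 p := mem_interior_iff_mem_nhds.1 hp
  have hnear : ∀ᶠ q in 𝓝 p, q ∈ P₀ ∧ 2 • p - q ∈ P₀ := Filter.inter_mem hP₀ (hreflect hP₀)
  refine hasFDerivAt_of_sandwich hH.two_mul_sub_comp_two_smul_sub hH ?_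
    (by rw [two_nsmul_sub_self, hHp]; ring) hHp
  filter_upwards [hnear] with q ⟨hq, hq'⟩
  refine EReal.toReal_mem_Icc ⟨?_, ?_⟩
  · have hm (y : X) : (H p : EReal) ≤ f (y, p) := by
      rw [← hfH p (interior_subset hp), hmin, hg p]
      exact iInf_le _ y
    exact hg q ▸ two_mul_sub_le_iInf_of_convex hbot hconv hm (hfH _ hq')
  · exact hfH q hq ▸ hg q ▸ iInf_le _ ystar

/-- differentiability of the marginal function of a proper convex lsc
function with rectangular effective domain, differentiable in the parameter. -/
theorem stmt0
    {X P : Type*} [NormedAddCommGroup X] [InnerProductSpace ℝ X] [FiniteDimensional ℝ X]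
    [NormedAddCommGroup P] [InnerProductSpace ℝ P] [FiniteDimensional ℝ P]
    (f : X × P → EReal) (Y : Set X) (P₀ : Set P)
    (hbot : ∀ z, f z ≠ ⊥) (hprop : ∃ z, f z ≠ ⊤)
    (hconv : ∀ (z w : X × P) (a b : ℝ), 0 < a → 0 < b → a + b = 1 → f z < ⊤ → f w < ⊤ →
      f (a • z + b • w) ≤ (a : EReal) * f z + (b : EReal) * f w)
    (hlsc : LowerSemicontinuous f)
    (hdom : {z : X × P | f z < ⊤} = Y ×ˢ P₀)
    (hdiff : ∀ y ∈ Y, ∀ p ∈ interior P₀,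
      DifferentiableAt ℝ (fun q => (f (y, q)).toReal) p)
    (g : P → EReal) (hg : ∀ q, g q = ⨅ y : X, f (y, q))
    (p : P) (hp : p ∈ interior P₀)
    (ystar : X) (hmin : f (ystar, p) = g p) :
    HasGradientAt (fun q => (g q).toReal)
      (gradient (fun q => (f (ystar, q)).toReal) p) p :=
  stmt0_general f Y P₀ hbot hprop hconv hdom hdiff g hg p hp ystar hmin
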